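/- Let AT(k, ℓ) and MT(k, ℓ) be the aligned and misaligned (k, ℓ)-teeth hypergraphs on n = k(ℓ+1) vertices. There exists a bijection η from the ⌊(k−1)n/k⌋-element subsets of V(AT(k, ℓ)) to the ⌊(k−1)n/k⌋-element subsets of V(MT(k, ℓ)) such that for every such subset J, the induced sub-hypergraph AT(k, ℓ)[J] is isomorphic to MT(k, ℓ)[η(J)]. -/

import Mathlib

open Polynomial

universe u

/-- A hypergraph: a finite vertex set together with a multiset of hyperedges
(multi-edges are allowed). -/
structure MultiHypergraph (V : Type u) where
  verts : Finset V
  edges : Multiset (Finset V)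

namespace MultiHypergraph

variable {V : Type u}

section Basic

variable [DecidableEq V]

/-- The sub-hypergraph induced on a vertex subset `S`. -/
def induce (H : MultiHypergraph V) (S : Finset V) : MultiHypergraph V :=
  ⟨H.verts ∩ S, H.edges.filter fun e => e ⊆ S⟩

/-- `H` is `k`-uniform. -/
def IsUniform (H : MultiHypergraph V) (k : ℕ) : Prop := ∀ e ∈ H.edges, e.card = k

open scoped Classical in
/-- `p(H, i)`: the number of matchings of `i` (pairwise disjoint) hyperedges of `H`. -/
noncomputable def matchingCount (H : MultiHypergraph V) (i : ℕ) : ℕ :=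
  ((H.edges.powersetCard i).filter fun M => M.Pairwise Disjoint).card

/-- The matching polynomial `m_k(H, x) = ∑ (-1)^i p(H,i) x^(n - k i)`. -/
noncomputable def matchingPoly (k : ℕ) (H : MultiHypergraph V) : Polynomial ℚ :=
  ∑ i ∈ Finset.range (H.verts.card / k + 1),
    Polynomial.C ((-1 : ℚ) ^ i * (H.matchingCount i : ℚ)) *
      Polynomial.X ^ (H.verts.card - k * i)

/-- A perfect matching: pairwise disjoint hyperedges covering all vertices. -/
def IsPerfectMatching (H : MultiHypergraph V) (M : Multiset (Finset V)) : Prop :=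
  M ≤ H.edges ∧ M.Pairwise Disjoint ∧ ∀ v ∈ H.verts, ∃ e ∈ M, v ∈ e

/-- A walk is recorded as a start vertex `v` and a list of steps `(eᵢ, vᵢ)`.
`WalkIncidence` says consecutive vertices are incident with the corresponding edges. -/
def WalkIncidence (v : V) (s : List (Finset V × V)) : Prop :=
  ∀ i < s.length,
    (v :: s.map Prod.snd).getD i v ∈ (s.getD i (∅, v)).1 ∧
    (s.getD i (∅, v)).2 ∈ (s.getD i (∅, v)).1

/-- `H` contains a Berge-cycle: a closed Berge-walk of length `≥ 1` whose edge
occurrences are distinct (as a sub-multiset of `H.edges`, so a repeated multi-edge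
does give a Berge-cycle) and whose vertices are distinct except for the endpoints. -/
def HasBergeCycle (H : MultiHypergraph V) : Prop :=
  ∃ (v0 : V) (s : List (Finset V × V)), s ≠ [] ∧ WalkIncidence v0 s ∧
    (↑(s.map Prod.fst) : Multiset (Finset V)) ≤ H.edges ∧
    (s.map Prod.snd).getLastD v0 = v0 ∧
    (v0 :: (s.map Prod.snd).dropLast).Nodup

/-- `u` is reachable from `v` in `H` by a Berge-walk. -/
def Reach (H : MultiHypergraph V) (v u : V) : Prop :=
  ∃ s : List (Finset V × V), (∀ p ∈ s, p.1 ∈ H.edges) ∧ WalkIncidence v s ∧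
    (s.map Prod.snd).getLastD v = u

/-- MultiHypergraph isomorphism (possibly across different vertex types). -/
def HIso {V₁ V₂ : Type*} [DecidableEq V₂] (H1 : MultiHypergraph V₁) (H2 : MultiHypergraph V₂) : Prop :=
  ∃ f : V₁ → V₂, Set.BijOn f ↑H1.verts ↑H2.verts ∧
    H2.edges = H1.edges.map (Finset.image f)

/-- The multiset of induced sub-hypergraphs of `H` on `t` vertices. -/
noncomputable def inducedMultiset (H : MultiHypergraph V) (t : ℕ) : Multiset (MultiHypergraph V) :=
  (H.verts.powersetCard t).val.map fun S => H.induce S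

end Basic

section Walks

variable [LinearOrder V]

/-- The conflict set `C_i = {v_{i-1}} ∪ {u ∈ V(eᵢ) \ {v_{i-1}, vᵢ} : u ≺ vᵢ}`. -/
def conflictSet (prev cur : V) (e : Finset V) : Finset V :=
  insert prev (((e.erase prev).erase cur).filter fun u => u < cur)

/-- `s` is a conflict-free walk of `H` starting at `v`: a Berge-path each of whose
edges avoids all previous conflict sets. -/
def IsCFWalk (H : MultiHypergraph V) (v : V) (s : List (Finset V × V)) : Prop :=
  (v :: s.map Prod.snd).Nodup ∧ (s.map Prod.fst).Nodup ∧
  (∀ p ∈ s, p.1 ∈ H.edges) ∧ WalkIncidence v s ∧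
  ∀ i < s.length, ∀ j < i,
    Disjoint (s.getD i (∅, v)).1
      (conflictSet ((v :: s.map Prod.snd).getD j v) ((s.getD j (∅, v)).2)
        ((s.getD j (∅, v)).1))

/-- Vertices of the `k`-walk-tree `T(H, v)`: conflict-free walks starting at `v`. -/
def WalkTreeVert (H : MultiHypergraph V) (v : V) : Type u :=
  {s : List (Finset V × V) // IsCFWalk H v s}

/-- The root: the one-vertex walk `(v)`. -/
def rootWalk (H : MultiHypergraph V) (v : V) : WalkTreeVert H v :=
  ⟨[], by refine ⟨by simp, by simp, by simp, ?_, ?_⟩ <;> intro i hi <;> simp at hi⟩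

/-- `π`: the terminal vertex of a conflict-free walk. -/
def piEnd {H : MultiHypergraph V} {v : V} (W : WalkTreeVert H v) : V :=
  (W.1.map Prod.snd).getLastD v

/-- `S` is the hyperedge of the walk-tree `T(H, v)` formed from the walk `W0` and
a hyperedge `e` of `H`: it consists of `W0` together with its `k-1` one-step
extensions along `e`. -/
def IsTreeEdgeFrom (H : MultiHypergraph V) (v : V) (e : Finset V)
    (W0 : WalkTreeVert H v) (S : Set (WalkTreeVert H v)) : Prop :=
  e ∈ H.edges ∧ piEnd W0 ∈ e ∧
  (∀ u ∈ e, u ≠ piEnd W0 → IsCFWalk H v (W0.1 ++ [(e, u)])) ∧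
  S = {W0} ∪ {W | ∃ u ∈ e, u ≠ piEnd W0 ∧ W.1 = W0.1 ++ [(e, u)]}

/-- `b` is the cyclic successor of `a` in the linearly ordered finite set `e`. -/
def cyclicSucc (e : Finset V) (a b : V) : Prop :=
  a ∈ e ∧ b ∈ e ∧
    ((a < b ∧ ∀ c ∈ e, a < c → b ≤ c) ∨ ((∀ c ∈ e, c ≤ a) ∧ ∀ c ∈ e, b ≤ c))

/-- Arcs of the digraph `D(H, v)`: each hyperedge of the walk-tree, ordered by the
linear order of `V(H)` via `π`, is replaced by a directed `k`-cycle. -/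
def WalkArc (H : MultiHypergraph V) (v : V) (W W' : WalkTreeVert H v) : Prop :=
  ∃ e W0 S, IsTreeEdgeFrom H v e W0 S ∧ W ∈ S ∧ W' ∈ S ∧
    cyclicSucc e (piEnd W) (piEnd W')

/-- A closed walk of length `ℓ` in `D(H, v)` starting (and ending) at the root `(v)`. -/
def IsClosedWalkFromRoot (H : MultiHypergraph V) (v : V) {ℓ : ℕ}
    (w : Fin (ℓ + 1) → WalkTreeVert H v) : Prop :=
  w 0 = rootWalk H v ∧ w (Fin.last ℓ) = rootWalk H v ∧
    ∀ i : Fin ℓ, WalkArc H v (w i.castSucc) (w i.succ)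

/-- `d_H(v, ℓ, m)`: the number of closed walks of length `ℓ` in `D(H, v)` starting
at the root whose trajectory visits exactly `m` distinct vertices of `H`. -/
noncomputable def closedWalkCount (H : MultiHypergraph V) (v : V) (ℓ m : ℕ) : ℕ :=
  Nat.card {w : Fin (ℓ + 1) → WalkTreeVert H v //
    IsClosedWalkFromRoot H v w ∧
    (Finset.univ.image fun i => piEnd (w i)).card = m}

end Walks

end MultiHypergraph

/-! ### The aligned and misaligned teeth hypergraphs -/

/-- Vertex type for the teeth constructions: `u`-vertices, `c`-vertices, `b`-vertices. -/
abbrev TeethV : Type := ℕ ⊕ ((ℕ × ℕ) ⊕ ℕ)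

def uu (i : ℕ) : TeethV := Sum.inl i
def cc (i : ℕ) (j : ℕ) : TeethV := Sum.inr (Sum.inl (i, j))
def bb (i : ℕ) : TeethV := Sum.inr (Sum.inr i)

/-- The row of centre vertices `c_i^1, …, c_i^{k-2}`. -/
def crow (k i : ℕ) : Finset TeethV := (Finset.range (k - 2)).image (cc i)

/-- The aligned-(k,ℓ)-teeth `AT(k, ℓ)`. -/
def ATeeth (k ℓ : ℕ) : MultiHypergraph TeethV where
  verts :=
    ((Finset.range (ℓ + 2)).image uu) ∪
      (((Finset.range (ℓ + 1)) ×ˢ (Finset.range (k - 2))).image fun p => cc p.1 p.2) ∪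
      ((Finset.Icc 1 ℓ).image bb)
  edges :=
    ((Finset.range (ℓ + 1)).val.map fun i =>
      insert (uu i) (insert (uu (i + 1)) (crow k i))) +
    ((Finset.Icc 1 (ℓ - 1)).val.map fun j =>
      insert (bb j) (insert (bb (j + 1)) (crow k j)))

/-- The misaligned-(k,ℓ)-teeth `MT(k, ℓ)`. -/
def MTeeth (k ℓ : ℕ) : MultiHypergraph TeethV where
  verts :=
    ((Finset.range (ℓ + 1)).image uu) ∪
      (((Finset.range (ℓ + 1)) ×ˢ (Finset.range (k - 2))).image fun p => cc p.1 p.2) ∪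
      ((Finset.Icc 1 (ℓ + 1)).image bb)
  edges :=
    ((Finset.range ℓ).val.map fun i =>
      insert (uu i) (insert (uu (i + 1)) (crow k i))) +
    ((Finset.Icc 1 ℓ).val.map fun j =>
      insert (bb j) (insert (bb (j + 1)) (crow k j)))

namespace TeethAux

open Finset

/-! ### The column swap `u_i ↔ b_i` for columns `i ≥ c` -/

def swapV (c : ℕ) : TeethV → TeethV
  | Sum.inl i => if c ≤ i then bb i else uu i
  | Sum.inr (Sum.inl p) => cc p.1 p.2
  | Sum.inr (Sum.inr i) => if c ≤ i then uu i else bb i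

lemma swapV_uu (c i : ℕ) : swapV c (uu i) = if c ≤ i then bb i else uu i := rfl
lemma swapV_bb (c i : ℕ) : swapV c (bb i) = if c ≤ i then uu i else bb i := rfl
lemma swapV_cc (c i j : ℕ) : swapV c (cc i j) = cc i j := rfl

lemma swapV_invol (c : ℕ) : Function.Involutive (swapV c) := by
  intro v
  rcases v with i | p | i
  · show swapV c (swapV c (uu i)) = uu i
    rw [swapV_uu]
    by_cases h : c ≤ i
    · rw [if_pos h, swapV_bb, if_pos h]
    · rw [if_neg h, swapV_uu, if_neg h]
  · rfl
  · show swapV c (swapV c (bb i)) = bb i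
    rw [swapV_bb]
    by_cases h : c ≤ i
    · rw [if_pos h, swapV_uu, if_pos h]
    · rw [if_neg h, swapV_bb, if_neg h]

lemma swapV_inj (c : ℕ) : Function.Injective (swapV c) := (swapV_invol c).injective

lemma mem_image_swapV {c : ℕ} {S : Finset TeethV} {x : TeethV} :
    x ∈ S.image (swapV c) ↔ swapV c x ∈ S := by
  constructor
  · rintro hx
    obtain ⟨y, hy, rfl⟩ := Finset.mem_image.mp hx
    rwa [swapV_invol]
  · intro h
    exact Finset.mem_image.mpr ⟨swapV c x, h, swapV_invol c x⟩

lemma subset_image_swapV {c : ℕ} {S e : Finset TeethV} :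
    e ⊆ S.image (swapV c) ↔ e.image (swapV c) ⊆ S := by
  rw [Finset.image_subset_iff]
  constructor
  · intro h x hx; exact mem_image_swapV.mp (h hx)
  · intro h x hx; exact mem_image_swapV.mpr (h x hx)

lemma image_swapV_crow (c K i : ℕ) : (crow K i).image (swapV c) = crow K i := by
  unfold crow
  rw [Finset.image_image]
  exact Finset.image_congr (fun j _ => swapV_cc c i j)

/-! ### The two kinds of edges -/

def EE (K i : ℕ) : Finset TeethV := insert (uu i) (insert (uu (i+1)) (crow K i))
def FF (K j : ℕ) : Finset TeethV := insert (bb j) (insert (bb (j+1)) (crow K j))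

lemma ATeeth_edges (k ℓ : ℕ) : (ATeeth k ℓ).edges =
    (Finset.range (ℓ+1)).val.map (EE k) + (Finset.Icc 1 (ℓ-1)).val.map (FF k) := rfl

lemma MTeeth_edges (k ℓ : ℕ) : (MTeeth k ℓ).edges =
    (Finset.range ℓ).val.map (EE k) + (Finset.Icc 1 ℓ).val.map (FF k) := rfl

lemma image_swapV_EE_of_le {c i : ℕ} (h : c ≤ i) (K : ℕ) :
    (EE K i).image (swapV c) = FF K i := by
  rw [EE, FF, Finset.image_insert, Finset.image_insert, image_swapV_crow,
    swapV_uu, swapV_uu, if_pos h, if_pos (h.trans (Nat.le_succ i))]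

lemma image_swapV_EE_of_lt {c i : ℕ} (h : i + 1 < c) (K : ℕ) :
    (EE K i).image (swapV c) = EE K i := by
  rw [EE, Finset.image_insert, Finset.image_insert, image_swapV_crow,
    swapV_uu, swapV_uu, if_neg (by omega), if_neg (by omega)]

lemma image_swapV_FF_of_le {c j : ℕ} (h : c ≤ j) (K : ℕ) :
    (FF K j).image (swapV c) = EE K j := by
  rw [EE, FF, Finset.image_insert, Finset.image_insert, image_swapV_crow,
    swapV_bb, swapV_bb, if_pos h, if_pos (h.trans (Nat.le_succ j))]

lemma image_swapV_FF_of_lt {c j : ℕ} (h : j + 1 < c) (K : ℕ) :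
    (FF K j).image (swapV c) = FF K j := by
  rw [FF, Finset.image_insert, Finset.image_insert, image_swapV_crow,
    swapV_bb, swapV_bb, if_neg (by omega), if_neg (by omega)]

lemma EE_subset_image_iff_low {c i K : ℕ} {S : Finset TeethV} (h : i + 1 < c) :
    EE K i ⊆ S.image (swapV c) ↔ EE K i ⊆ S := by
  rw [subset_image_swapV, image_swapV_EE_of_lt h]

lemma EE_subset_image_iff_high {c i K : ℕ} {S : Finset TeethV} (h : c ≤ i) :
    EE K i ⊆ S.image (swapV c) ↔ FF K i ⊆ S := by
  rw [subset_image_swapV, image_swapV_EE_of_le h]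

lemma FF_subset_image_iff_low {c j K : ℕ} {S : Finset TeethV} (h : j + 1 < c) :
    FF K j ⊆ S.image (swapV c) ↔ FF K j ⊆ S := by
  rw [subset_image_swapV, image_swapV_FF_of_lt h]

lemma FF_subset_image_iff_high {c j K : ℕ} {S : Finset TeethV} (h : c ≤ j) :
    FF K j ⊆ S.image (swapV c) ↔ EE K j ⊆ S := by
  rw [subset_image_swapV, image_swapV_FF_of_le h]

/-! ### Valid cuts -/

def CValid (K : ℕ) (S : Finset TeethV) (c : ℕ) : Prop :=
  ¬ crow K (c-1) ⊆ S ∨ (uu (c-1) ∉ S ∧ bb (c-1) ∉ S) ∨ (uu c ∉ S ∧ bb c ∉ S)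

instance (K : ℕ) (S : Finset TeethV) (c : ℕ) : Decidable (CValid K S c) := by
  unfold CValid; infer_instance

lemma CValid_succ {K : ℕ} {S : Finset TeethV} {d : ℕ} :
    CValid K S (d+1) ↔
      (¬ crow K d ⊆ S ∨ (uu d ∉ S ∧ bb d ∉ S) ∨ (uu (d+1) ∉ S ∧ bb (d+1) ∉ S)) := by
  simp only [CValid, Nat.add_sub_cancel]

section Dead

variable {K : ℕ} {S : Finset TeethV} {d : ℕ}

lemma not_EE_subset (hval : CValid K S (d+1)) : ¬ EE K d ⊆ S := by
  intro hsub
  have h1 : uu d ∈ S := hsub (by simp [EE])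
  have h2 : uu (d+1) ∈ S := hsub (by simp [EE])
  have h3 : crow K d ⊆ S := fun x hx => hsub (by simp [EE, hx])
  rcases CValid_succ.mp hval with h | h | h <;> tauto

lemma not_FF_subset (hval : CValid K S (d+1)) : ¬ FF K d ⊆ S := by
  intro hsub
  have h1 : bb d ∈ S := hsub (by simp [FF])
  have h2 : bb (d+1) ∈ S := hsub (by simp [FF])
  have h3 : crow K d ⊆ S := fun x hx => hsub (by simp [FF, hx])
  rcases CValid_succ.mp hval with h | h | h <;> tauto

lemma not_EE_subset_image (hval : CValid K S (d+1)) :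
    ¬ EE K d ⊆ S.image (swapV (d+1)) := by
  rw [subset_image_swapV, EE, Finset.image_insert, Finset.image_insert, image_swapV_crow,
    swapV_uu, swapV_uu, if_neg (by omega), if_pos (le_refl (d+1))]
  intro hsub
  have h1 : uu d ∈ S := hsub (by simp)
  have h2 : bb (d+1) ∈ S := hsub (by simp)
  have h3 : crow K d ⊆ S := fun x hx => hsub (by simp [hx])
  rcases CValid_succ.mp hval with h | h | h <;> tauto

lemma not_FF_subset_image (hval : CValid K S (d+1)) :
    ¬ FF K d ⊆ S.image (swapV (d+1)) := by
  rw [subset_image_swapV, FF, Finset.image_insert, Finset.image_insert, image_swapV_crow,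
    swapV_bb, swapV_bb, if_neg (by omega), if_pos (le_refl (d+1))]
  intro hsub
  have h1 : bb d ∈ S := hsub (by simp)
  have h2 : uu (d+1) ∈ S := hsub (by simp)
  have h3 : crow K d ⊆ S := fun x hx => hsub (by simp [hx])
  rcases CValid_succ.mp hval with h | h | h <;> tauto

end Dead


/-! ### Existence of a valid cut (pigeonhole) -/

lemma exists_cvalid (k ℓ : ℕ) (hk : 2 ≤ k) (S : Finset TeethV)
    (hcard : S.card = (k-1)*(ℓ+1)) :
    ∃ c, c ∈ Finset.Icc 1 (ℓ+1) ∧ CValid k S c := by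
  by_contra hno
  push_neg at hno
  have hfail : ∀ d ≤ ℓ, crow k d ⊆ S ∧ (uu d ∈ S ∨ bb d ∈ S) ∧
      (uu (d+1) ∈ S ∨ bb (d+1) ∈ S) := by
    intro d hd
    have h := hno (d+1) (Finset.mem_Icc.mpr ⟨by omega, by omega⟩)
    rw [CValid_succ] at h
    simp only [not_or, not_and_or, not_not] at h
    tauto
  classical
  set pick : ℕ → TeethV := fun d => if uu d ∈ S then uu d else bb d with hpick_def
  have hpick_mem : ∀ d ≤ ℓ+1, pick d ∈ S := by
    intro d hd
    by_cases h : uu d ∈ S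
    · simpa [pick, h] using h
    · have hb : bb d ∈ S := by
        rcases Nat.lt_or_ge d (ℓ+1) with hlt | hge
        · rcases (hfail d (by omega)).2.1 with h' | h'
          · exact absurd h' h
          · exact h'
        · have hd' : d = ℓ + 1 := by omega
          subst hd'
          rcases (hfail ℓ le_rfl).2.2 with h' | h'
          · exact absurd h' h
          · exact h'
      simpa [pick, h] using hb
  have hpick_inj : Function.Injective pick := by
    intro a b hab
    simp only [pick] at hab
    split_ifs at hab <;> simpa [uu, bb] using hab
  have hcc_inj : Function.Injective (fun p : ℕ × ℕ => cc p.1 p.2) := by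
    rintro ⟨a, b⟩ ⟨a', b'⟩ h
    simpa [cc, Prod.ext_iff] using h
  set W : Finset TeethV :=
    ((Finset.range (ℓ+1) ×ˢ Finset.range (k-2)).image fun p => cc p.1 p.2) ∪
      (Finset.range (ℓ+2)).image pick with hW
  have hWsub : W ⊆ S := by
    intro x hx
    rcases Finset.mem_union.mp hx with hx | hx
    · obtain ⟨p, hp, rfl⟩ := Finset.mem_image.mp hx
      obtain ⟨hp1, hp2⟩ := Finset.mem_product.mp hp
      have hp1' : p.1 ≤ ℓ := by simpa [Nat.lt_succ_iff] using Finset.mem_range.mp hp1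
      exact (hfail p.1 hp1').1 (Finset.mem_image_of_mem (cc p.1) hp2)
    · obtain ⟨d, hd, rfl⟩ := Finset.mem_image.mp hx
      exact hpick_mem d (Nat.lt_succ_iff.mp (Finset.mem_range.mp hd))
  have hdisj : Disjoint
      ((Finset.range (ℓ+1) ×ˢ Finset.range (k-2)).image fun p : ℕ × ℕ => cc p.1 p.2)
      ((Finset.range (ℓ+2)).image pick) := by
    rw [Finset.disjoint_left]
    rintro x hx1 hx2
    obtain ⟨p, _, rfl⟩ := Finset.mem_image.mp hx1
    obtain ⟨d, _, hd⟩ := Finset.mem_image.mp hx2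
    simp only [pick] at hd
    split_ifs at hd <;> simp [cc, uu, bb] at hd
  have hWcard : W.card = (ℓ+1)*(k-2) + (ℓ+2) := by
    rw [hW, Finset.card_union_of_disjoint hdisj,
      Finset.card_image_of_injective _ hcc_inj,
      Finset.card_image_of_injective _ hpick_inj,
      Finset.card_product, Finset.card_range, Finset.card_range]
    simp
  have hle := Finset.card_le_card hWsub
  rw [hWcard, hcard] at hle
  have e1 : (k-1)*(ℓ+1) = (ℓ+1)*(k-2) + (ℓ+1) := by
    have h2 : k - 1 = (k-2) + 1 := by omega
    rw [h2, Nat.succ_mul, Nat.mul_comm]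
  rw [e1] at hle
  generalize (ℓ+1)*(k-2) = x at hle
  omega

/-! ### The canonical cut -/

def cutSet (k ℓ : ℕ) (S : Finset TeethV) : Finset ℕ :=
  (Finset.Icc 1 (ℓ+1)).filter (fun c => CValid k S c)

def cutc (k ℓ : ℕ) (S : Finset TeethV) : ℕ := (cutSet k ℓ S).max.unbotD 0

lemma cutc_mem {k ℓ : ℕ} {S : Finset TeethV} (h : (cutSet k ℓ S).Nonempty) :
    cutc k ℓ S ∈ cutSet k ℓ S := by
  obtain ⟨a, ha⟩ := Finset.max_of_nonempty h
  have : cutc k ℓ S = a := by rw [cutc, ha]; rfl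
  rw [this]
  exact Finset.mem_of_max ha

lemma cutSet_nonempty (k ℓ : ℕ) (hk : 2 ≤ k) (S : Finset TeethV)
    (hcard : S.card = (k-1)*(ℓ+1)) : (cutSet k ℓ S).Nonempty := by
  obtain ⟨c, hc1, hc2⟩ := exists_cvalid k ℓ hk S hcard
  exact ⟨c, Finset.mem_filter.mpr ⟨hc1, hc2⟩⟩

lemma CValid_image_iff {k : ℕ} {S : Finset TeethV} (c c' : ℕ) :
    CValid k (S.image (swapV c)) c' ↔ CValid k S c' := by
  have hcrow : ∀ d, (crow k d ⊆ S.image (swapV c)) ↔ crow k d ⊆ S := fun d => by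
    rw [subset_image_swapV, image_swapV_crow]
  have hpair : ∀ j, ((uu j ∉ S.image (swapV c)) ∧ (bb j ∉ S.image (swapV c))) ↔
      (uu j ∉ S ∧ bb j ∉ S) := by
    intro j
    rw [mem_image_swapV, mem_image_swapV, swapV_uu, swapV_bb]
    by_cases h : c ≤ j
    · rw [if_pos h, if_pos h]; tauto
    · rw [if_neg h, if_neg h]
  unfold CValid
  rw [hcrow, hpair, hpair]

lemma cutc_image {k ℓ : ℕ} {S : Finset TeethV} (c : ℕ) :
    cutc k ℓ (S.image (swapV c)) = cutc k ℓ S := by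
  unfold cutc cutSet
  congr 2
  exact Finset.filter_congr (fun x _ => by rw [CValid_image_iff])


/-! ### Vertex set membership -/

lemma mem_AT_uu {k ℓ i : ℕ} : uu i ∈ (ATeeth k ℓ).verts ↔ i ≤ ℓ+1 := by
  simp [ATeeth, uu, bb, cc]; omega

lemma mem_AT_bb {k ℓ i : ℕ} : bb i ∈ (ATeeth k ℓ).verts ↔ 1 ≤ i ∧ i ≤ ℓ := by
  simp [ATeeth, uu, bb, cc]

lemma mem_AT_cc {k ℓ i j : ℕ} : cc i j ∈ (ATeeth k ℓ).verts ↔ i ≤ ℓ ∧ j < k-2 := by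
  simp [ATeeth, uu, bb, cc]

lemma mem_MT_uu {k ℓ i : ℕ} : uu i ∈ (MTeeth k ℓ).verts ↔ i ≤ ℓ := by
  simp [MTeeth, uu, bb, cc]

lemma mem_MT_bb {k ℓ i : ℕ} : bb i ∈ (MTeeth k ℓ).verts ↔ 1 ≤ i ∧ i ≤ ℓ+1 := by
  simp [MTeeth, uu, bb, cc]

lemma mem_MT_cc {k ℓ i j : ℕ} : cc i j ∈ (MTeeth k ℓ).verts ↔ i ≤ ℓ ∧ j < k-2 := by
  simp [MTeeth, uu, bb, cc]

lemma bb_top_not_mem_AT {k ℓ : ℕ} {S : Finset TeethV}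
    (hsub : S ⊆ (ATeeth k ℓ).verts) : bb (ℓ+1) ∉ S := fun h => by
  have := mem_AT_bb.mp (hsub h); omega

lemma uu_top_not_mem_MT {k ℓ : ℕ} {S : Finset TeethV}
    (hsub : S ⊆ (MTeeth k ℓ).verts) : uu (ℓ+1) ∉ S := fun h => by
  have := mem_MT_uu.mp (hsub h); omega

lemma AT_subset_MT_aux {k ℓ : ℕ} {S : Finset TeethV}
    (hsub : S ⊆ (ATeeth k ℓ).verts) (htop : uu (ℓ+1) ∉ S) :
    S ⊆ (MTeeth k ℓ).verts := by
  intro x hx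
  have hxA := hsub hx
  rcases x with i | p | i
  · have h1 : i ≤ ℓ+1 := mem_AT_uu.mp hxA
    have h2 : i ≠ ℓ+1 := fun h => htop (h ▸ hx)
    exact mem_MT_uu.mpr (by omega)
  · obtain ⟨a, b⟩ := p
    have h1 := mem_AT_cc.mp hxA
    exact mem_MT_cc.mpr h1
  · have h1 := mem_AT_bb.mp hxA
    exact mem_MT_bb.mpr ⟨h1.1, by omega⟩

lemma MT_subset_AT_aux {k ℓ : ℕ} {S : Finset TeethV}
    (hsub : S ⊆ (MTeeth k ℓ).verts) (htop : bb (ℓ+1) ∉ S) :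
    S ⊆ (ATeeth k ℓ).verts := by
  intro x hx
  have hxM := hsub hx
  rcases x with i | p | i
  · have h1 : i ≤ ℓ := mem_MT_uu.mp hxM
    exact mem_AT_uu.mpr (by omega)
  · obtain ⟨a, b⟩ := p
    exact mem_AT_cc.mpr (mem_MT_cc.mp hxM)
  · have h1 := mem_MT_bb.mp hxM
    have h2 : i ≠ ℓ+1 := fun h => htop (h ▸ hx)
    exact mem_AT_bb.mpr ⟨h1.1, by omega⟩

lemma image_swap_subset_MT {k ℓ c : ℕ} {S : Finset TeethV}
    (hsub : S ⊆ (ATeeth k ℓ).verts) (hc1 : 1 ≤ c) (hc2 : c ≤ ℓ+1) :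
    S.image (swapV c) ⊆ (MTeeth k ℓ).verts := by
  intro x hx
  obtain ⟨y, hy, rfl⟩ := Finset.mem_image.mp hx
  have hyA := hsub hy
  rcases y with i | p | i
  · have h1 : i ≤ ℓ+1 := mem_AT_uu.mp hyA
    rw [show (Sum.inl i : TeethV) = uu i from rfl, swapV_uu]
    split_ifs with h
    · exact mem_MT_bb.mpr ⟨by omega, h1⟩
    · exact mem_MT_uu.mpr (by omega)
  · obtain ⟨a, b⟩ := p
    exact mem_MT_cc.mpr (mem_AT_cc.mp hyA)
  · have h1 := mem_AT_bb.mp hyA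
    rw [show (Sum.inr (Sum.inr i) : TeethV) = bb i from rfl, swapV_bb]
    split_ifs with h
    · exact mem_MT_uu.mpr h1.2
    · exact mem_MT_bb.mpr ⟨h1.1, by omega⟩

lemma image_swap_subset_AT {k ℓ c : ℕ} {S : Finset TeethV}
    (hsub : S ⊆ (MTeeth k ℓ).verts) (hc1 : 1 ≤ c) (hc2 : c ≤ ℓ+1) :
    S.image (swapV c) ⊆ (ATeeth k ℓ).verts := by
  intro x hx
  obtain ⟨y, hy, rfl⟩ := Finset.mem_image.mp hx
  have hyM := hsub hy
  rcases y with i | p | i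
  · have h1 : i ≤ ℓ := mem_MT_uu.mp hyM
    rw [show (Sum.inl i : TeethV) = uu i from rfl, swapV_uu]
    split_ifs with h
    · exact mem_AT_bb.mpr ⟨by omega, h1⟩
    · exact mem_AT_uu.mpr (by omega)
  · obtain ⟨a, b⟩ := p
    exact mem_AT_cc.mpr (mem_MT_cc.mp hyM)
  · have h1 := mem_MT_bb.mp hyM
    rw [show (Sum.inr (Sum.inr i) : TeethV) = bb i from rfl, swapV_bb]
    split_ifs with h
    · exact mem_AT_uu.mpr h1.2
    · exact mem_AT_bb.mpr ⟨h1.1, by omega⟩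

/-! ### The bijection -/

def etaA (k ℓ : ℕ) (S : Finset TeethV) : Finset TeethV :=
  if uu (ℓ+1) ∈ S then S.image (swapV (cutc k ℓ S)) else S

def etaM (k ℓ : ℕ) (S : Finset TeethV) : Finset TeethV :=
  if bb (ℓ+1) ∈ S then S.image (swapV (cutc k ℓ S)) else S

lemma etaA_spec {k ℓ : ℕ} {S : Finset TeethV} (hk : 2 ≤ k)
    (hsub : S ⊆ (ATeeth k ℓ).verts) (hcard : S.card = (k-1)*(ℓ+1)) :
    etaA k ℓ S ⊆ (MTeeth k ℓ).verts ∧ (etaA k ℓ S).card = (k-1)*(ℓ+1) := by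
  unfold etaA
  split_ifs with h
  · have hmem := cutc_mem (cutSet_nonempty k ℓ hk S hcard)
    have hc := Finset.mem_Icc.mp (Finset.mem_filter.mp hmem).1
    refine ⟨image_swap_subset_MT hsub hc.1 hc.2, ?_⟩
    rw [Finset.card_image_of_injective _ (swapV_inj _)]
    exact hcard
  · exact ⟨AT_subset_MT_aux hsub h, hcard⟩

lemma etaM_spec {k ℓ : ℕ} {S : Finset TeethV} (hk : 2 ≤ k)
    (hsub : S ⊆ (MTeeth k ℓ).verts) (hcard : S.card = (k-1)*(ℓ+1)) :
    etaM k ℓ S ⊆ (ATeeth k ℓ).verts ∧ (etaM k ℓ S).card = (k-1)*(ℓ+1) := by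
  unfold etaM
  split_ifs with h
  · have hmem := cutc_mem (cutSet_nonempty k ℓ hk S hcard)
    have hc := Finset.mem_Icc.mp (Finset.mem_filter.mp hmem).1
    refine ⟨image_swap_subset_AT hsub hc.1 hc.2, ?_⟩
    rw [Finset.card_image_of_injective _ (swapV_inj _)]
    exact hcard
  · exact ⟨MT_subset_AT_aux hsub h, hcard⟩

lemma etaM_etaA {k ℓ : ℕ} {S : Finset TeethV} (hk : 2 ≤ k)
    (hsub : S ⊆ (ATeeth k ℓ).verts) (hcard : S.card = (k-1)*(ℓ+1)) :
    etaM k ℓ (etaA k ℓ S) = S := by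
  unfold etaA
  split_ifs with h
  · have hmem := cutc_mem (cutSet_nonempty k ℓ hk S hcard)
    have hc := Finset.mem_Icc.mp (Finset.mem_filter.mp hmem).1
    have hb : bb (ℓ+1) ∈ S.image (swapV (cutc k ℓ S)) := by
      rw [mem_image_swapV, swapV_bb, if_pos hc.2]
      exact h
    unfold etaM
    rw [if_pos hb, cutc_image, Finset.image_image,
      show swapV (cutc k ℓ S) ∘ swapV (cutc k ℓ S) = id from funext (swapV_invol _),
      Finset.image_id]
  · unfold etaM
    rw [if_neg (bb_top_not_mem_AT hsub)]

lemma etaA_etaM {k ℓ : ℕ} {S : Finset TeethV} (hk : 2 ≤ k)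
    (hsub : S ⊆ (MTeeth k ℓ).verts) (hcard : S.card = (k-1)*(ℓ+1)) :
    etaA k ℓ (etaM k ℓ S) = S := by
  unfold etaM
  split_ifs with h
  · have hmem := cutc_mem (cutSet_nonempty k ℓ hk S hcard)
    have hc := Finset.mem_Icc.mp (Finset.mem_filter.mp hmem).1
    have hb : uu (ℓ+1) ∈ S.image (swapV (cutc k ℓ S)) := by
      rw [mem_image_swapV, swapV_uu, if_pos hc.2]
      exact h
    unfold etaA
    rw [if_pos hb, cutc_image, Finset.image_image,
      show swapV (cutc k ℓ S) ∘ swapV (cutc k ℓ S) = id from funext (swapV_invol _),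
      Finset.image_id]
  · unfold etaA
    rw [if_neg (uu_top_not_mem_MT hsub)]


/-! ### Surviving edges -/

lemma msplit {P : ℕ → Prop} [DecidablePred P] (s : Finset ℕ) (c : ℕ) :
    s.val.filter P =
      ((s.filter (fun i => i < c ∧ P i)).val + (s.filter (fun i => ¬ i < c ∧ P i)).val) := by
  rw [Finset.filter_val, Finset.filter_val, ← Multiset.filter_filter, ← Multiset.filter_filter,
    Multiset.filter_add_not]

lemma edges_filter_swap (k ℓ d : ℕ) (S : Finset TeethV) (hd : d ≤ ℓ)
    (hval : CValid k S (d+1)) :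
    (MTeeth k ℓ).edges.filter (fun e => e ⊆ S.image (swapV (d+1))) =
      ((ATeeth k ℓ).edges.filter (fun e => e ⊆ S)).map (Finset.image (swapV (d+1))) := by
  have dE := not_EE_subset (K := k) hval
  have dF := not_FF_subset (K := k) hval
  have dE' := not_EE_subset_image (K := k) hval
  have dF' := not_FF_subset_image (K := k) hval
  set c := d + 1 with hc
  rw [MTeeth_edges, ATeeth_edges, Multiset.filter_add, Multiset.filter_add,
    Multiset.map_add, Multiset.filter_map, Multiset.filter_map, Multiset.filter_map,
    Multiset.filter_map, Multiset.map_map, Multiset.map_map]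
  simp only [Function.comp]
  rw [msplit (Finset.range ℓ) c, msplit (Finset.Icc 1 ℓ) c,
    msplit (Finset.range (ℓ+1)) c, msplit (Finset.Icc 1 (ℓ-1)) c,
    Multiset.map_add, Multiset.map_add, Multiset.map_add, Multiset.map_add]
  have eM1 : (Finset.range ℓ).filter (fun i => i < c ∧ EE k i ⊆ S.image (swapV c)) =
      (Finset.range (ℓ+1)).filter (fun i => i < c ∧ EE k i ⊆ S) := by
    ext i
    simp only [Finset.mem_filter, Finset.mem_range]
    constructor
    · rintro ⟨hi, hic, hsub⟩
      have hne : i ≠ d := by rintro rfl; exact dE' hsub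
      have hlow : i + 1 < c := by omega
      exact ⟨by omega, hic, (EE_subset_image_iff_low hlow).mp hsub⟩
    · rintro ⟨hi, hic, hsub⟩
      have hne : i ≠ d := by rintro rfl; exact dE hsub
      have hlow : i + 1 < c := by omega
      exact ⟨by omega, hic, (EE_subset_image_iff_low hlow).mpr hsub⟩
  have eM2 : (Finset.range ℓ).filter (fun i => ¬ i < c ∧ EE k i ⊆ S.image (swapV c)) =
      (Finset.Icc 1 (ℓ-1)).filter (fun j => ¬ j < c ∧ FF k j ⊆ S) := by
    ext i
    simp only [Finset.mem_filter, Finset.mem_range, Finset.mem_Icc]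
    constructor
    · rintro ⟨hi, hic, hsub⟩
      exact ⟨⟨by omega, by omega⟩, hic, (EE_subset_image_iff_high (by omega)).mp hsub⟩
    · rintro ⟨hi, hic, hsub⟩
      exact ⟨by omega, hic, (EE_subset_image_iff_high (by omega)).mpr hsub⟩
  have eN1 : (Finset.Icc 1 ℓ).filter (fun j => j < c ∧ FF k j ⊆ S.image (swapV c)) =
      (Finset.Icc 1 (ℓ-1)).filter (fun j => j < c ∧ FF k j ⊆ S) := by
    ext j
    simp only [Finset.mem_filter, Finset.mem_Icc]
    constructor
    · rintro ⟨hj, hjc, hsub⟩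
      have hne : j ≠ d := by rintro rfl; exact dF' hsub
      have hlow : j + 1 < c := by omega
      exact ⟨⟨hj.1, by omega⟩, hjc, (FF_subset_image_iff_low hlow).mp hsub⟩
    · rintro ⟨hj, hjc, hsub⟩
      have hne : j ≠ d := by rintro rfl; exact dF hsub
      have hlow : j + 1 < c := by omega
      exact ⟨⟨hj.1, by omega⟩, hjc, (FF_subset_image_iff_low hlow).mpr hsub⟩
  have eN2 : (Finset.Icc 1 ℓ).filter (fun j => ¬ j < c ∧ FF k j ⊆ S.image (swapV c)) =
      (Finset.range (ℓ+1)).filter (fun i => ¬ i < c ∧ EE k i ⊆ S) := by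
    ext j
    simp only [Finset.mem_filter, Finset.mem_Icc, Finset.mem_range]
    constructor
    · rintro ⟨hj, hjc, hsub⟩
      exact ⟨by omega, hjc, (FF_subset_image_iff_high (by omega)).mp hsub⟩
    · rintro ⟨hj, hjc, hsub⟩
      exact ⟨⟨by omega, by omega⟩, hjc, (FF_subset_image_iff_high (by omega)).mpr hsub⟩
  have mA1 : Multiset.map (fun i => (EE k i).image (swapV c))
      ((Finset.range (ℓ+1)).filter (fun i => i < c ∧ EE k i ⊆ S)).val =
      Multiset.map (EE k)
        ((Finset.range (ℓ+1)).filter (fun i => i < c ∧ EE k i ⊆ S)).val := by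
    apply Multiset.map_congr rfl
    intro i hi
    have hi' := Finset.mem_filter.mp (Finset.mem_val.mp hi)
    have hne : i ≠ d := fun h => dE (h ▸ hi'.2.2)
    exact image_swapV_EE_of_lt (by omega) k
  have mA2 : Multiset.map (fun i => (EE k i).image (swapV c))
      ((Finset.range (ℓ+1)).filter (fun i => ¬ i < c ∧ EE k i ⊆ S)).val =
      Multiset.map (FF k)
        ((Finset.range (ℓ+1)).filter (fun i => ¬ i < c ∧ EE k i ⊆ S)).val := by
    apply Multiset.map_congr rfl
    intro i hi
    have hi' := Finset.mem_filter.mp (Finset.mem_val.mp hi)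
    exact image_swapV_EE_of_le (by omega) k
  have mB1 : Multiset.map (fun j => (FF k j).image (swapV c))
      ((Finset.Icc 1 (ℓ-1)).filter (fun j => j < c ∧ FF k j ⊆ S)).val =
      Multiset.map (FF k)
        ((Finset.Icc 1 (ℓ-1)).filter (fun j => j < c ∧ FF k j ⊆ S)).val := by
    apply Multiset.map_congr rfl
    intro j hj
    have hj' := Finset.mem_filter.mp (Finset.mem_val.mp hj)
    have hne : j ≠ d := fun h => dF (h ▸ hj'.2.2)
    exact image_swapV_FF_of_lt (by omega) k
  have mB2 : Multiset.map (fun j => (FF k j).image (swapV c))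
      ((Finset.Icc 1 (ℓ-1)).filter (fun j => ¬ j < c ∧ FF k j ⊆ S)).val =
      Multiset.map (EE k)
        ((Finset.Icc 1 (ℓ-1)).filter (fun j => ¬ j < c ∧ FF k j ⊆ S)).val := by
    apply Multiset.map_congr rfl
    intro j hj
    have hj' := Finset.mem_filter.mp (Finset.mem_val.mp hj)
    exact image_swapV_FF_of_le (by omega) k
  rw [eM1, eM2, eN1, eN2, mA1, mA2, mB1, mB2]
  abel

lemma edges_filter_id (k ℓ : ℕ) (S : Finset TeethV)
    (hA : uu (ℓ+1) ∉ S) (hB : bb (ℓ+1) ∉ S) :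
    (MTeeth k ℓ).edges.filter (fun e => e ⊆ S) =
      (ATeeth k ℓ).edges.filter (fun e => e ⊆ S) := by
  rw [MTeeth_edges, ATeeth_edges, Multiset.filter_add, Multiset.filter_add,
    Multiset.filter_map, Multiset.filter_map, Multiset.filter_map, Multiset.filter_map]
  simp only [Function.comp]
  have e1 : Multiset.filter (fun i => EE k i ⊆ S) (Finset.range ℓ).val =
      Multiset.filter (fun i => EE k i ⊆ S) (Finset.range (ℓ+1)).val := by
    rw [← Finset.filter_val, ← Finset.filter_val]
    apply congrArg Finset.val
    ext i
    simp only [Finset.mem_filter, Finset.mem_range]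
    constructor
    · rintro ⟨hi, hs⟩
      exact ⟨by omega, hs⟩
    · rintro ⟨hi, hs⟩
      have hne : i ≠ ℓ := by
        rintro rfl
        exact hA (hs (by simp [EE]))
      exact ⟨by omega, hs⟩
  have e2 : Multiset.filter (fun j => FF k j ⊆ S) (Finset.Icc 1 ℓ).val =
      Multiset.filter (fun j => FF k j ⊆ S) (Finset.Icc 1 (ℓ-1)).val := by
    rw [← Finset.filter_val, ← Finset.filter_val]
    apply congrArg Finset.val
    ext j
    simp only [Finset.mem_filter, Finset.mem_Icc]
    constructor
    · rintro ⟨hj, hs⟩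
      have hne : j ≠ ℓ := by
        rintro rfl
        exact hB (hs (by simp [FF]))
      exact ⟨⟨hj.1, by omega⟩, hs⟩
    · rintro ⟨hj, hs⟩
      exact ⟨⟨hj.1, by omega⟩, hs⟩
  rw [e1, e2]

/-! ### The isomorphism -/

lemma hiso_main {k ℓ : ℕ} {J : Finset TeethV} (hk : 2 ≤ k)
    (hsub : J ⊆ (ATeeth k ℓ).verts) (hcard : J.card = (k-1)*(ℓ+1)) :
    MultiHypergraph.HIso ((ATeeth k ℓ).induce J) ((MTeeth k ℓ).induce (etaA k ℓ J)) := by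
  have hvertsA : ((ATeeth k ℓ).induce J).verts = J :=
    Finset.inter_eq_right.mpr hsub
  have hvertsM : ((MTeeth k ℓ).induce (etaA k ℓ J)).verts = etaA k ℓ J :=
    Finset.inter_eq_right.mpr (etaA_spec hk hsub hcard).1
  by_cases h : uu (ℓ+1) ∈ J
  · have hne := cutSet_nonempty k ℓ hk J hcard
    have hmem := cutc_mem hne
    have hcIcc := Finset.mem_Icc.mp (Finset.mem_filter.mp hmem).1
    have hval : CValid k J (cutc k ℓ J) := (Finset.mem_filter.mp hmem).2
    obtain ⟨d, hd_eq, hd⟩ : ∃ d, cutc k ℓ J = d + 1 ∧ d ≤ ℓ :=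
      ⟨cutc k ℓ J - 1, by omega, by omega⟩
    have hval' : CValid k J (d+1) := hd_eq ▸ hval
    have hetaA : etaA k ℓ J = J.image (swapV (d+1)) := by
      unfold etaA
      rw [if_pos h, hd_eq]
    refine ⟨swapV (d+1), ?_, ?_⟩
    · rw [hvertsA, hvertsM, hetaA, Finset.coe_image]
      exact Set.InjOn.bijOn_image (Function.Injective.injOn (swapV_inj (d+1)))
    · show (MTeeth k ℓ).edges.filter _ = ((ATeeth k ℓ).edges.filter _).map _
      rw [hetaA]
      exact edges_filter_swap k ℓ d J hd hval'
  · have hetaA : etaA k ℓ J = J := by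
      unfold etaA
      rw [if_neg h]
    refine ⟨id, ?_, ?_⟩
    · rw [hvertsA, hvertsM, hetaA]
      exact Set.bijOn_id _
    · rw [show Finset.image (id : TeethV → TeethV) = id from funext (fun e => Finset.image_id),
        Multiset.map_id]
      show (MTeeth k ℓ).edges.filter _ = (ATeeth k ℓ).edges.filter _
      rw [hetaA]
      exact edges_filter_id k ℓ J h (bb_top_not_mem_AT hsub)

end TeethAux




/-- there is a bijection `η` between the `⌊(k−1)n/k⌋`-element
vertex subsets of `AT(k,ℓ)` and of `MT(k,ℓ)` (where `n = k(ℓ+1)`) with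
`AT(k,ℓ)[J] ≅ MT(k,ℓ)[η(J)]` for every such subset `J`. -/
theorem teeth_subset_bijection (k ℓ : ℕ) (hk : 2 ≤ k) :
    ∃ η : {S // S ∈ (ATeeth k ℓ).verts.powersetCard ((k - 1) * (k * (ℓ + 1)) / k)} ≃
          {S // S ∈ (MTeeth k ℓ).verts.powersetCard ((k - 1) * (k * (ℓ + 1)) / k)},
      ∀ J, MultiHypergraph.HIso ((ATeeth k ℓ).induce J.1) ((MTeeth k ℓ).induce (η J).1) := by
  have hk0 : 0 < k := by omega
  have ht : (k - 1) * (k * (ℓ + 1)) / k = (k - 1) * (ℓ + 1) := by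
    rw [Nat.mul_div_assoc _ (dvd_mul_right k (ℓ+1)), Nat.mul_div_cancel_left _ hk0]
  have memA : ∀ S : Finset TeethV,
      S ∈ (ATeeth k ℓ).verts.powersetCard ((k - 1) * (k * (ℓ + 1)) / k) ↔
        (S ⊆ (ATeeth k ℓ).verts ∧ S.card = (k-1)*(ℓ+1)) := by
    intro S
    rw [Finset.mem_powersetCard, ht]
  have memM : ∀ S : Finset TeethV,
      S ∈ (MTeeth k ℓ).verts.powersetCard ((k - 1) * (k * (ℓ + 1)) / k) ↔
        (S ⊆ (MTeeth k ℓ).verts ∧ S.card = (k-1)*(ℓ+1)) := by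
    intro S
    rw [Finset.mem_powersetCard, ht]
  refine ⟨⟨fun J => ⟨TeethAux.etaA k ℓ J.1, ?_⟩, fun J => ⟨TeethAux.etaM k ℓ J.1, ?_⟩,
    ?_, ?_⟩, ?_⟩
  · obtain ⟨h1, h2⟩ := (memA J.1).mp J.2
    exact (memM _).mpr (TeethAux.etaA_spec hk h1 h2)
  · obtain ⟨h1, h2⟩ := (memM J.1).mp J.2
    exact (memA _).mpr (TeethAux.etaM_spec hk h1 h2)
  · intro J
    apply Subtype.ext
    obtain ⟨h1, h2⟩ := (memA J.1).mp J.2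
    exact TeethAux.etaM_etaA hk h1 h2
  · intro J
    apply Subtype.ext
    obtain ⟨h1, h2⟩ := (memM J.1).mp J.2
    exact TeethAux.etaA_etaM hk h1 h2
  · intro J
    obtain ⟨h1, h2⟩ := (memA J.1).mp J.2
    exact TeethAux.hiso_main hk h1 h2
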